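/- arXiv:1210.1952 — 3 statements merged into one kernel-verified Lean document; each statement's English description precedes it below -/
import Mathlib

section
/- For a continuous function f : I → ℝ on an interval, the set M(f) of points y ∈ I at which the graph is monotone (i.e., there exist c ≥ 1 and ε > 0 such that |ψ(x) − ψ(y)| ≤ c|ψ(x) − ψ(z)| for all x ∈ (y−ε, y) ∩ I and z ∈ (y, y+ε) ∩ I) is an F_σ subset of I. -/
/-
For fixed constants `c` and `ε`, the points `y ∈ I` at which the monotonicity inequality holds
form a set closed in `I`: given `x < y < z` as in the definition, the inequality is a closed
condition on `ψ y` that is imposed on every such point `w` near `y`, because `x` and `z` still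
lie within `ε` of `w` on either side. `M(f)` is the union of these sets over `c = n + 1`,
`ε = 1 / (n + 1)`.
-/

/-- The natural parametrization of the graph of `f`, as a map into the Euclidean plane. -/
noncomputable def graphMap (f : ℝ → ℝ) (t : ℝ) : EuclideanSpace ℝ (Fin 2) := WithLp.toLp 2 ![t, f t]

/-- `y` is an `M`-point of `f` (relative to `I`): the graph of `f` is monotone at `ψ y`. -/
def IsMPoint (f : ℝ → ℝ) (I : Set ℝ) (y : ℝ) : Prop :=
  ∃ c : ℝ, 1 ≤ c ∧ ∃ ε > 0, ∀ x ∈ Set.Ioo (y - ε) y ∩ I, ∀ z ∈ Set.Ioo y (y + ε) ∩ I,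
    ‖graphMap f x - graphMap f y‖ ≤ c * ‖graphMap f x - graphMap f z‖

open Set

lemma continuousOn_graphMap {f : ℝ → ℝ} {I : Set ℝ} (hf : ContinuousOn f I) :
    ContinuousOn (graphMap f) I := by
  refine (PiLp.continuous_toLp 2 (fun _ : Fin 2 => ℝ)).comp_continuousOn
    (f := fun t => ![t, f t]) (continuousOn_pi.mpr fun i => ?_)
  fin_cases i
  · exact continuousOn_id
  · exact hf

section MPointsWith

variable {E : Type*} [SeminormedAddCommGroup E]

def mPointsWith (g : ℝ → E) (I : Set ℝ) (c ε : ℝ) : Set ℝ :=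
  {y ∈ I | ∀ x ∈ Ioo (y - ε) y ∩ I, ∀ z ∈ Ioo y (y + ε) ∩ I, ‖g x - g y‖ ≤ c * ‖g x - g z‖}

lemma mPointsWith_subset (g : ℝ → E) (I : Set ℝ) (c ε : ℝ) : mPointsWith g I c ε ⊆ I :=
  fun _ hy => hy.1

lemma mPointsWith_mono {g : ℝ → E} {I : Set ℝ} {c c' ε ε' : ℝ} (hc : c ≤ c') (hε : ε' ≤ ε) :
    mPointsWith g I c ε ⊆ mPointsWith g I c' ε' := by
  rintro y ⟨hyI, H⟩
  refine ⟨hyI, fun x hx z hz => ?_⟩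
  calc ‖g x - g y‖ ≤ c * ‖g x - g z‖ :=
        H x ⟨⟨by linarith [hx.1.1], hx.1.2⟩, hx.2⟩ z ⟨⟨hz.1.1, by linarith [hz.1.2]⟩, hz.2⟩
    _ ≤ c' * ‖g x - g z‖ := by gcongr

lemma closure_inter_subset_mPointsWith {g : ℝ → E} {I : Set ℝ} (hg : ContinuousOn g I)
    (c ε : ℝ) : closure (mPointsWith g I c ε) ∩ I ⊆ mPointsWith g I c ε := by
  rintro y ⟨hy, hyI⟩
  refine ⟨hyI, fun x hx z hz => ?_⟩
  set U := Ioo x (x + ε) ∩ Ioo (z - ε) z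
  have hyU : y ∈ U := ⟨⟨hx.1.2, by linarith [hx.1.1]⟩, ⟨by linarith [hz.1.2], hz.1.1⟩⟩
  have hy' : y ∈ closure (U ∩ mPointsWith g I c ε) :=
    (isOpen_Ioo.inter isOpen_Ioo).inter_closure ⟨hyU, hy⟩
  have hgy : ContinuousWithinAt g (U ∩ mPointsWith g I c ε) y :=
    (hg y hyI).mono fun _ hw => hw.2.1
  refine ContinuousWithinAt.closure_le hy' (continuousWithinAt_const.sub hgy).norm
    continuousWithinAt_const ?_
  rintro w ⟨hwU, -, H⟩
  exact H x ⟨⟨by linarith [hwU.1.2], hwU.1.1⟩, hx.2⟩ z ⟨⟨hwU.2.2, by linarith [hwU.2.1]⟩, hz.2⟩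

lemma mPointsWith_eq_closure_inter {g : ℝ → E} {I : Set ℝ} (hg : ContinuousOn g I) (c ε : ℝ) :
    mPointsWith g I c ε = closure (mPointsWith g I c ε) ∩ I :=
  (subset_inter subset_closure (mPointsWith_subset g I c ε)).antisymm
    (closure_inter_subset_mPointsWith hg c ε)

end MPointsWith

lemma setOf_isMPoint_eq_iUnion (f : ℝ → ℝ) (I : Set ℝ) :
    {y ∈ I | IsMPoint f I y} = ⋃ n : ℕ, mPointsWith (graphMap f) I (n + 1) (1 / (n + 1)) := by
  ext y
  simp only [mem_ofPred_eq, mem_iUnion]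
  constructor
  · rintro ⟨hyI, c, hc, ε, hε, H⟩
    obtain ⟨n₁, hn₁⟩ := exists_nat_gt c
    obtain ⟨n₂, hn₂⟩ := exists_nat_one_div_lt hε
    refine ⟨max n₁ n₂, mPointsWith_mono ?_ ?_ ⟨hyI, H⟩⟩
    · have : (n₁ : ℝ) ≤ max n₁ n₂ := by exact_mod_cast le_max_left n₁ n₂
      linarith
    · calc 1 / ((max n₁ n₂ : ℕ) + 1 : ℝ) ≤ 1 / (n₂ + 1) := by gcongr; exact le_max_right n₁ n₂
        _ ≤ ε := hn₂.le
  · rintro ⟨n, hyI, H⟩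
    exact ⟨hyI, n + 1, by linarith [n.cast_nonneg (α := ℝ)], 1 / (n + 1), by positivity, H⟩

theorem stmt_3_general (I : Set ℝ) (f : ℝ → ℝ) (hf : ContinuousOn f I) :
    ∃ F : ℕ → Set ℝ, (∀ n, ∃ C : Set ℝ, IsClosed C ∧ F n = C ∩ I) ∧
      {y ∈ I | IsMPoint f I y} = ⋃ n, F n :=
  ⟨fun n => mPointsWith (graphMap f) I (n + 1) (1 / (n + 1)),
    fun _ => ⟨_, isClosed_closure, mPointsWith_eq_closure_inter (continuousOn_graphMap hf) _ _⟩,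
    setOf_isMPoint_eq_iUnion f I⟩

/-- For `f : I → ℝ` continuous on an interval, the set `M(f)` of points of `I` at which
the graph is monotone is an `F_σ` subset of `I` (a countable union of sets closed in `I`). -/
theorem stmt_3 (I : Set ℝ) (hI : I.OrdConnected) (f : ℝ → ℝ) (hf : ContinuousOn f I) :
    ∃ F : ℕ → Set ℝ, (∀ n, ∃ C : Set ℝ, IsClosed C ∧ F n = C ∩ I) ∧
      {y ∈ I | IsMPoint f I y} = ⋃ n, F n :=
  stmt_3_general I f hf
end

section
/- For a continuous function f : I → ℝ and c ≥ 1, the set of points y where the graph of f is c-monotone (there is ε > 0 such that |ψ(x) − ψ(y)| ≤ c|ψ(x) − ψ(z)| for all x ∈ (y−ε, y) ∩ I, z ∈ (y, y+ε) ∩ I) can be written as a countable union of sets E_n such that the restriction of the graph to each E_n is a closed c-monotone subset of ℝ². -/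
/-- A set `M ⊆ ℝ²` is `c`-monotone if there is a linear order `lt` on `M` such that
`|p − q| ≤ c·|p − r|` for all `p < q < r` in `M`. -/
def CMonotoneSet (c : ℝ) (M : Set (EuclideanSpace ℝ (Fin 2))) : Prop :=
  ∃ lt : M → M → Prop, IsTrans M lt ∧ IsTrichotomous M lt ∧
    ∀ p q r : M, lt p q → lt q r →
      ‖(p : EuclideanSpace ℝ (Fin 2)) - q‖ ≤ c * ‖(p : EuclideanSpace ℝ (Fin 2)) - r‖

/-- `y` is an `M_c`-point of `f` (relative to `I`). -/
def IsMcPoint (f : ℝ → ℝ) (I : Set ℝ) (c : ℝ) (y : ℝ) : Prop :=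
  ∃ ε > 0, ∀ x ∈ Set.Ioo (y - ε) y ∩ I, ∀ z ∈ Set.Ioo y (y + ε) ∩ I,
    ‖graphMap f x - graphMap f y‖ ≤ c * ‖graphMap f x - graphMap f z‖

/-!
Fixing the radius `ε` in the definition of an `M_c`-point gives a condition that is closed on
every compact `K ⊆ I`, by continuity of the graph map. On a set of diameter `< ε` where it holds,
ordering the points of the graph by their abscissa makes the graph `c`-monotone. An
order-connected subset of `ℝ` is σ-compact, so letting `K` run through a compact exhaustion of
`I`, `ε` through `1 / (n + 1)` and slicing by a grid of mesh `< ε` gives countably many pieces,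
each with a compact, hence closed, `c`-monotone graph.
-/

open Set

theorem Set.OrdConnected.isLocallyClosed {α : Type*} [ConditionallyCompleteLinearOrder α]
    [TopologicalSpace α] [OrderTopology α] [DenselyOrdered α] {s : Set α}
    (hs : s.OrdConnected) : IsLocallyClosed s := by
  rcases hs.isPreconnected.mem_intervals with h | h | h | h | h | h | h | h | h | h <;> rw [h]
  · exact isLocallyClosed_Icc
  · exact isLocallyClosed_Ico
  · exact isLocallyClosed_Ioc
  · exact isLocallyClosed_Ioo
  · exact isLocallyClosed_Ici
  · exact isLocallyClosed_Ioi
  · exact isLocallyClosed_Iic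
  · exact isLocallyClosed_Iio
  · exact isOpen_univ.isLocallyClosed
  · exact isOpen_empty.isLocallyClosed

theorem Set.OrdConnected.isSigmaCompact {α : Type*} [ConditionallyCompleteLinearOrder α]
    [TopologicalSpace α] [OrderTopology α] [DenselyOrdered α] [LocallyCompactSpace α]
    [SecondCountableTopology α] {s : Set α} (hs : s.OrdConnected) : IsSigmaCompact s := by
  have := hs.isLocallyClosed.locallyCompactSpace
  simpa using isSigmaCompact_range (continuous_subtype_val (p := (· ∈ s)))

theorem CMonotoneSet.of_injOn {α : Type*} [LinearOrder α] {c : ℝ}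
    {M : Set (EuclideanSpace ℝ (Fin 2))} (φ : EuclideanSpace ℝ (Fin 2) → α) (hφ : InjOn φ M)
    (h : ∀ p ∈ M, ∀ q ∈ M, ∀ r ∈ M, φ p < φ q → φ q < φ r → ‖p - q‖ ≤ c * ‖p - r‖) :
    CMonotoneSet c M := by
  refine ⟨fun p q => φ p < φ q, ⟨fun _ _ _ => lt_trans⟩, ⟨fun p q hpq hqp => ?_⟩,
    fun p q r => h p p.2 q q.2 r r.2⟩
  exact Subtype.ext (hφ p.2 q.2 (le_antisymm (not_lt.1 hqp) (not_lt.1 hpq)))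

section graphMap

variable {f : ℝ → ℝ} {I : Set ℝ}

@[simp]
theorem graphMap_apply_zero (t : ℝ) : graphMap f t 0 = t := rfl

theorem ContinuousOn.graphMap (hf : ContinuousOn f I) : ContinuousOn (graphMap f) I := by
  refine (PiLp.continuous_toLp 2 _).comp_continuousOn (continuousOn_pi.2 fun i => ?_)
  fin_cases i
  · exact continuousOn_id
  · exact hf

theorem isClosed_graphMap_image (hf : ContinuousOn f I) {E : Set ℝ} (hE : IsCompact E)
    (hEI : E ⊆ I) : IsClosed (graphMap f '' E) :=
  (hE.image_of_continuousOn (hf.graphMap.mono hEI)).isClosed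

end graphMap

def IsMcPointOfRadius (f : ℝ → ℝ) (I : Set ℝ) (c ε y : ℝ) : Prop :=
  ∀ x ∈ Ioo (y - ε) y ∩ I, ∀ z ∈ Ioo y (y + ε) ∩ I,
    ‖graphMap f x - graphMap f y‖ ≤ c * ‖graphMap f x - graphMap f z‖

section IsMcPointOfRadius

variable {f : ℝ → ℝ} {I : Set ℝ} {c ε : ℝ}

theorem IsMcPointOfRadius.mono {ε' y : ℝ} (h : IsMcPointOfRadius f I c ε y) (hε : ε' ≤ ε) :
    IsMcPointOfRadius f I c ε' y := fun x hx z hz =>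
  h x ⟨⟨by linarith [hx.1.1], hx.1.2⟩, hx.2⟩ z ⟨⟨hz.1.1, by linarith [hz.1.2]⟩, hz.2⟩

theorem setOf_isMcPoint_eq_iUnion :
    {y ∈ I | IsMcPoint f I c y} =
      ⋃ n : ℕ, {y ∈ I | IsMcPointOfRadius f I c (1 / (n + 1)) y} := by
  ext y
  simp only [mem_ofPred_eq, mem_iUnion]
  constructor
  · rintro ⟨hy, ε, hε, h⟩
    obtain ⟨n, hn⟩ := exists_nat_one_div_lt hε
    exact ⟨n, hy, IsMcPointOfRadius.mono h hn.le⟩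
  · rintro ⟨n, hy, h⟩
    exact ⟨hy, 1 / (n + 1), Nat.one_div_pos_of_nat, h⟩

theorem isClosed_setOf_isMcPointOfRadius (hf : ContinuousOn f I) {K : Set ℝ} (hK : IsClosed K)
    (hKI : K ⊆ I) : IsClosed {y ∈ K | IsMcPointOfRadius f I c ε y} := by
  refine isClosed_of_closure_subset fun y hy => ?_
  have hyK : y ∈ K := closure_minimal (fun _ h => h.1) hK hy
  refine ⟨hyK, fun x hx z hz => ?_⟩
  set U := Ioo x (x + ε) ∩ Ioo (z - ε) z
  have hyU : y ∈ U := ⟨⟨hx.1.2, by linarith [hx.1.1]⟩, ⟨by linarith [hz.1.2], hz.1.1⟩⟩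
  set C := K ∩ (fun t => ‖graphMap f x - graphMap f t‖) ⁻¹'
    Iic (c * ‖graphMap f x - graphMap f z‖)
  have hclosed : IsClosed C :=
    (continuousOn_const.sub (hf.graphMap.mono hKI)).norm.preimage_isClosed_of_isClosed hK
      isClosed_Iic
  have hsub : U ∩ {y ∈ K | IsMcPointOfRadius f I c ε y} ⊆ C := by
    rintro t ⟨⟨⟨hxt, htx⟩, hzt, htz⟩, htK, ht⟩
    exact ⟨htK, ht x ⟨⟨by linarith, hxt⟩, hx.2⟩ z ⟨⟨htz, by linarith⟩, hz.2⟩⟩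
  have hyU' : y ∈ closure (U ∩ {y ∈ K | IsMcPointOfRadius f I c ε y}) :=
    (isOpen_Ioo.inter isOpen_Ioo).inter_closure ⟨hyU, hy⟩
  exact (closure_minimal hsub hclosed hyU').2

theorem cMonotoneSet_graphMap_image {E : Set ℝ} (hEI : E ⊆ I)
    (hE : ∀ y ∈ E, IsMcPointOfRadius f I c ε y) {a b : ℝ} (hEab : E ⊆ Icc a b)
    (hab : b - a < ε) : CMonotoneSet c (graphMap f '' E) := by
  refine CMonotoneSet.of_injOn (· 0) ?_ ?_
  · rintro _ ⟨x, -, rfl⟩ _ ⟨y, -, rfl⟩ h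
    simp_all
  · rintro _ ⟨x, hx, rfl⟩ _ ⟨y, hy, rfl⟩ _ ⟨z, hz, rfl⟩ hxy hyz
    simp only [graphMap_apply_zero] at hxy hyz
    exact hE y hy x ⟨⟨by linarith [(hEab hx).1, (hEab hy).2], hxy⟩, hEI hx⟩
      z ⟨⟨hyz, by linarith [(hEab hz).2, (hEab hy).1]⟩, hEI hz⟩

end IsMcPointOfRadius

theorem stmt_4_general (I : Set ℝ) (hI : I.OrdConnected) (f : ℝ → ℝ) (hf : ContinuousOn f I)
    (c : ℝ) :
    ∃ E : ℕ → Set ℝ, {y ∈ I | IsMcPoint f I c y} = ⋃ n, E n ∧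
      ∀ n, IsClosed (graphMap f '' E n) ∧ CMonotoneSet c (graphMap f '' E n) := by
  obtain ⟨K, hK, rfl⟩ := hI.isSigmaCompact
  let ε (n : ℕ) : ℝ := 1 / (n + 1)
  let δ (n : ℕ) : ℝ := 1 / (n + 2)
  let piece (p : ℕ × ℕ × ℤ) : Set ℝ :=
    {y ∈ K p.2.1 | IsMcPointOfRadius f (⋃ m, K m) c (ε p.1) y} ∩
      Icc (p.2.2 • δ p.1) ((p.2.2 + 1) • δ p.1)
  have hpiece_subset (p : ℕ × ℕ × ℤ) : piece p ⊆ ⋃ m, K m :=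
    fun y hy => mem_iUnion_of_mem _ hy.1.1
  have hpiece_compact (p : ℕ × ℕ × ℤ) : IsCompact (piece p) :=
    (hK _).of_isClosed_subset ((isClosed_setOf_isMcPointOfRadius hf (hK _).isClosed
      (subset_iUnion K _)).inter isClosed_Icc) fun y hy => hy.1.1
  have hpiece_cMonotone (p : ℕ × ℕ × ℤ) : CMonotoneSet c (graphMap f '' piece p) := by
    refine cMonotoneSet_graphMap_image (hpiece_subset p) (fun y hy => hy.1.2)
      (fun y hy => hy.2) ?_
    rw [add_smul, one_smul, add_sub_cancel_left]
    exact one_div_lt_one_div_of_lt (by positivity) (by linarith)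
  refine ⟨fun k => piece ((Denumerable.eqv _).symm k), ?_, fun k =>
    ⟨isClosed_graphMap_image hf (hpiece_compact _) (hpiece_subset _), hpiece_cMonotone _⟩⟩
  rw [(Denumerable.eqv _).symm.surjective.iUnion_comp piece, setOf_isMcPoint_eq_iUnion]
  ext y
  simp only [mem_iUnion, mem_ofPred_eq, Prod.exists, piece]
  constructor
  · rintro ⟨n, ⟨m, hm⟩, hy⟩
    have hgrid := iUnion_Icc_zsmul (by positivity : 0 < δ n)
    obtain ⟨j, hj⟩ := mem_iUnion.1 (hgrid.ge (mem_univ y))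
    exact ⟨n, m, j, ⟨hm, hy⟩, hj⟩
  · rintro ⟨n, m, j, ⟨hm, hy⟩, -⟩
    exact ⟨n, ⟨m, hm⟩, hy⟩

/-- For `f : I → ℝ` continuous and `c ≥ 1`, the set of `M_c`-points of `f` is a countable
union of sets `E n` such that the restriction of the graph of `f` to each `E n` is a
closed `c`-monotone subset of the plane. -/
theorem stmt_4 (I : Set ℝ) (hI : I.OrdConnected) (f : ℝ → ℝ) (hf : ContinuousOn f I)
    (c : ℝ) (hc : 1 ≤ c) :
    ∃ E : ℕ → Set ℝ, {y ∈ I | IsMcPoint f I c y} = ⋃ n, E n ∧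
      ∀ n, IsClosed (graphMap f '' E n) ∧ CMonotoneSet c (graphMap f '' E n) :=
  stmt_4_general I hI f hf c
end

section
/- If f : I → ℝ is continuous and f has a (possibly infinite) derivative at a point y ∈ I, then y is an M-point of f; i.e., the graph of f is monotone at ψ(y). -/
/-!
A finite derivative makes `f` Lipschitz at `y`, so `‖ψ x - ψ y‖` is comparable to
`|x - y| ≤ |x - z|`. A derivative `+∞` makes the slope from `y` at least `1` nearby, so
`f x < f y < f z` with `|x - y| ≤ |f x - f y|`, and everything is bounded by the vertical distance
`|f x - f z|`. The case `-∞` reduces to `+∞` by reflecting the graph in the horizontal axis.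
-/

open Filter

/-- `f` has a derivative at `y` relative to `I`, a finite one or `+∞` or `−∞`. -/
def HasPossiblyInfiniteDerivAt (f : ℝ → ℝ) (I : Set ℝ) (y : ℝ) : Prop :=
  (∃ d : ℝ, HasDerivWithinAt f d I y) ∨
  Tendsto (fun t => (f t - f y) / (t - y)) (nhdsWithin y (I \ {y})) atTop ∨
  Tendsto (fun t => (f t - f y) / (t - y)) (nhdsWithin y (I \ {y})) atBot

open Topology

lemma norm_graphMap_sub (f : ℝ → ℝ) (x z : ℝ) :
    ‖graphMap f x - graphMap f z‖ = √((x - z) ^ 2 + (f x - f z) ^ 2) := by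
  rw [EuclideanSpace.norm_eq]
  simp [graphMap, Fin.sum_univ_two, sq_abs]

lemma abs_sub_le_norm_graphMap_sub (f : ℝ → ℝ) (x z : ℝ) :
    |x - z| ≤ ‖graphMap f x - graphMap f z‖ := by
  rw [norm_graphMap_sub, ← Real.sqrt_sq_eq_abs]
  exact Real.sqrt_le_sqrt (le_add_of_nonneg_right (sq_nonneg _))

lemma abs_apply_sub_le_norm_graphMap_sub (f : ℝ → ℝ) (x z : ℝ) :
    |f x - f z| ≤ ‖graphMap f x - graphMap f z‖ := by
  rw [norm_graphMap_sub, ← Real.sqrt_sq_eq_abs]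
  exact Real.sqrt_le_sqrt (le_add_of_nonneg_left (sq_nonneg _))

lemma norm_graphMap_sub_le (f : ℝ → ℝ) (x z : ℝ) :
    ‖graphMap f x - graphMap f z‖ ≤ |x - z| + |f x - f z| := by
  rw [norm_graphMap_sub, Real.sqrt_le_left (by positivity)]
  nlinarith [sq_abs (x - z), sq_abs (f x - f z), abs_nonneg (x - z), abs_nonneg (f x - f z)]

lemma norm_graphMap_neg_sub (f : ℝ → ℝ) (x z : ℝ) :
    ‖graphMap (-f) x - graphMap (-f) z‖ = ‖graphMap f x - graphMap f z‖ := by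
  simp only [norm_graphMap_sub, Pi.neg_apply]
  ring_nf

lemma isMPoint_neg_iff {f : ℝ → ℝ} {I : Set ℝ} {y : ℝ} : IsMPoint (-f) I y ↔ IsMPoint f I y := by
  simp only [IsMPoint, norm_graphMap_neg_sub]

lemma isMPoint_of_eventually {f : ℝ → ℝ} {I : Set ℝ} {y c : ℝ} {P : ℝ → Prop} (hc : 1 ≤ c)
    (hP : ∀ᶠ t in 𝓝[I \ {y}] y, P t)
    (hPc : ∀ x z, x < y → y < z → P x → P z →
      ‖graphMap f x - graphMap f y‖ ≤ c * ‖graphMap f x - graphMap f z‖) :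
    IsMPoint f I y := by
  obtain ⟨ε, hε, hsub⟩ := Metric.mem_nhdsWithin_iff.mp hP
  rw [Real.ball_eq_Ioo] at hsub
  refine ⟨c, hc, ε, hε, ?_⟩
  rintro x ⟨⟨hx₁, hx₂⟩, hxI⟩ z ⟨⟨hz₁, hz₂⟩, hzI⟩
  exact hPc x z hx₂ hz₁ (hsub ⟨⟨hx₁, by linarith⟩, hxI, hx₂.ne⟩)
    (hsub ⟨⟨by linarith, hz₂⟩, hzI, hz₁.ne'⟩)

lemma isMPoint_of_hasDerivWithinAt {f : ℝ → ℝ} {I : Set ℝ} {y d : ℝ}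
    (hd : HasDerivWithinAt f d I y) : IsMPoint f I y := by
  have hlip : ∀ᶠ t in 𝓝[I \ {y}] y, |f t - f y| ≤ (|d| + 1) * |t - y| := by
    filter_upwards [(hasDerivWithinAt_iff_tendsto_slope.mp hd).norm.eventually
      (gt_mem_nhds (lt_add_one ‖d‖)), self_mem_nhdsWithin] with t ht hty
    rw [slope_def_field, Real.norm_eq_abs, Real.norm_eq_abs, abs_div,
      div_lt_iff₀ (abs_pos.2 (sub_ne_zero.2 hty.2))] at ht
    exact ht.le
  refine isMPoint_of_eventually (c := |d| + 2) (by linarith [abs_nonneg d]) hlip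
    fun x z hxy hyz hx _ => ?_
  calc ‖graphMap f x - graphMap f y‖ ≤ |x - y| + |f x - f y| := norm_graphMap_sub_le f x y
    _ ≤ (|d| + 2) * |x - y| := by linarith
    _ ≤ (|d| + 2) * |x - z| := by
      gcongr (|d| + 2) * ?_
      rw [abs_of_neg (sub_neg.2 hxy), abs_of_neg (by linarith : x - z < 0)]
      linarith
    _ ≤ (|d| + 2) * ‖graphMap f x - graphMap f z‖ := by
      gcongr
      exact abs_sub_le_norm_graphMap_sub f x z

lemma isMPoint_of_tendsto_slope_atTop {f : ℝ → ℝ} {I : Set ℝ} {y : ℝ}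
    (hd : Tendsto (fun t => (f t - f y) / (t - y)) (𝓝[I \ {y}] y) atTop) :
    IsMPoint f I y := by
  refine isMPoint_of_eventually one_le_two (hd.eventually (eventually_ge_atTop 1))
    fun x z hxy hyz hx hz => ?_
  have hx' : f x - f y ≤ x - y := by
    have := (le_div_iff_of_neg (sub_neg.2 hxy)).mp hx
    linarith
  have hz' : z - y ≤ f z - f y := by
    have := (one_le_div (sub_pos.2 hyz)).mp hz
    linarith
  calc ‖graphMap f x - graphMap f y‖ ≤ |x - y| + |f x - f y| := norm_graphMap_sub_le f x y
    _ ≤ 2 * |f x - f z| := by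
      rw [abs_of_neg (by linarith), abs_of_neg (by linarith), abs_of_neg (by linarith)]
      linarith
    _ ≤ 2 * ‖graphMap f x - graphMap f z‖ := by
      gcongr
      exact abs_apply_sub_le_norm_graphMap_sub f x z

lemma isMPoint_of_tendsto_slope_atBot {f : ℝ → ℝ} {I : Set ℝ} {y : ℝ}
    (hd : Tendsto (fun t => (f t - f y) / (t - y)) (𝓝[I \ {y}] y) atBot) :
    IsMPoint f I y := by
  refine isMPoint_neg_iff.mp (isMPoint_of_tendsto_slope_atTop ?_)
  refine (tendsto_neg_atBot_atTop.comp hd).congr fun t => ?_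
  simp only [Function.comp_apply, Pi.neg_apply]
  ring

theorem stmt_6_general (I : Set ℝ) (f : ℝ → ℝ)
    (y : ℝ) (hd : HasPossiblyInfiniteDerivAt f I y) :
    IsMPoint f I y := by
  rcases hd with ⟨d, hd⟩ | hd | hd
  · exact isMPoint_of_hasDerivWithinAt hd
  · exact isMPoint_of_tendsto_slope_atTop hd
  · exact isMPoint_of_tendsto_slope_atBot hd

/-- If `f : I → ℝ` is continuous and has a (possibly infinite) derivative at `y ∈ I`,
then `y` is an `M`-point of `f`, i.e. the graph of `f` is monotone at `ψ y`. -/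
theorem stmt_6 (I : Set ℝ) (hI : I.OrdConnected) (f : ℝ → ℝ) (hf : ContinuousOn f I)
    (y : ℝ) (hy : y ∈ I) (hd : HasPossiblyInfiniteDerivAt f I y) :
    IsMPoint f I y :=
  stmt_6_general I f y hd
end
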